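/- arXiv:2401.07394 — 3 statements merged into one kernel-verified Lean document; each statement's English description precedes it below -/
import Mathlib

section
/- Let m ≥ 1 and k be natural numbers. With (x)_ℓ denoting the rising factorial (Pochhammer symbol) (x)_ℓ = x(x+1)⋯(x+ℓ−1), (x)_0 = 1, one has Σ_{ℓ=0}^{m} [(−m − 1/2)_ℓ (−m)_ℓ (k − m + 1/2)_ℓ] / [(1/2 − m)_ℓ (k − m + 3/2)_ℓ ℓ!] = ((k − m + 1/2)/(k + 1)) · Σ_{ℓ=0}^{m} [(−m − 1/2)_ℓ (−m)_ℓ] / [(1/2 − m)_ℓ ℓ!] + ((m + 1/2)/(k + 1)) · Σ_{ℓ=0}^{m} [(−m)_ℓ (k − m + 1/2)_ℓ] / [(k − m + 3/2)_ℓ ℓ!]. -/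
/-!
Write `a = -m - 1/2` and `b = k - m + 1/2`, so that the lower parameters are `a + 1` and `b + 1`.
Since `(a)_ℓ / (a + 1)_ℓ = a / (a + ℓ)`, the `ℓ`-th term of the `₃F₂` carries the factor
`a b / ((a + ℓ)(b + ℓ))`, and the partial fraction decomposition
`a b / ((a + ℓ)(b + ℓ)) = (b / (b - a)) · a / (a + ℓ) - (a / (b - a)) · b / (b + ℓ)`,
with `b - a = k + 1`, splits it term by term into the two `₂F₁` terms. No denominator vanishes
because `a` and `b` are half-integers.
-/

/-- The rising factorial (Pochhammer symbol) `(x)_n = x (x+1) ⋯ (x+n-1)`, `(x)_0 = 1`. -/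
noncomputable def risingFactorial (x : ℝ) (n : ℕ) : ℝ := ∏ i ∈ Finset.range n, (x + i)

open Finset

lemma risingFactorial_mul_add_natCast (a : ℝ) (n : ℕ) :
    risingFactorial a n * (a + n) = a * risingFactorial (a + 1) n := by
  unfold risingFactorial
  rw [← prod_range_succ, prod_range_succ']
  push_cast
  rw [add_zero, mul_comm]
  congr 1
  exact prod_congr rfl fun i _ => by ring

lemma risingFactorial_ne_zero {x : ℝ} (hx : ∀ i : ℕ, x + i ≠ 0) (n : ℕ) :
    risingFactorial x n ≠ 0 :=
  prod_ne_zero_iff.2 fun i _ => hx i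

lemma risingFactorial_div_risingFactorial_add_one {a : ℝ} (ha : ∀ i : ℕ, a + i ≠ 0)
    (n : ℕ) :
    risingFactorial a n / risingFactorial (a + 1) n = a / (a + n) := by
  have hsucc : ∀ i : ℕ, a + 1 + i ≠ 0 := fun i => by
    simpa only [Nat.cast_succ, add_assoc, add_comm (1 : ℝ)] using ha (i + 1)
  rw [div_eq_div_iff (risingFactorial_ne_zero hsucc n) (ha n),
    risingFactorial_mul_add_natCast]

lemma div_add_mul_div_add_eq_sub {a b t : ℝ} (ha : a + t ≠ 0) (hb : b + t ≠ 0)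
    (hab : b - a ≠ 0) :
    a / (a + t) * (b / (b + t)) = b / (b - a) * (a / (a + t)) - a / (b - a) * (b / (b + t)) := by
  field_simp
  ring

theorem sum_risingFactorial_ratio_mul_ratio {a b : ℝ} (ha : ∀ i : ℕ, a + i ≠ 0)
    (hb : ∀ i : ℕ, b + i ≠ 0) (hab : b - a ≠ 0) (s : Finset ℕ) (c : ℕ → ℝ) :
    ∑ ℓ ∈ s, risingFactorial a ℓ / risingFactorial (a + 1) ℓ *
        (risingFactorial b ℓ / risingFactorial (b + 1) ℓ) * c ℓ =
      b / (b - a) * ∑ ℓ ∈ s, risingFactorial a ℓ / risingFactorial (a + 1) ℓ * c ℓ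
        - a / (b - a) * ∑ ℓ ∈ s, risingFactorial b ℓ / risingFactorial (b + 1) ℓ * c ℓ := by
  rw [mul_sum, mul_sum, ← sum_sub_distrib]
  refine sum_congr rfl fun ℓ _ => ?_
  simp only [risingFactorial_div_risingFactorial_add_one ha,
    risingFactorial_div_risingFactorial_add_one hb,
    div_add_mul_div_add_eq_sub (ha ℓ) (hb ℓ) hab]
  ring

lemma intCast_add_half_add_natCast_ne_zero (z : ℤ) (i : ℕ) : (z : ℝ) + 1 / 2 + i ≠ 0 := by
  intro h
  have : ((2 * (z + i) + 1 : ℤ) : ℝ) = 0 := by push_cast; linarith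
  have : 2 * (z + i) + 1 = 0 := mod_cast this
  omega

theorem threeF2_splitting_general (m k : ℕ) :
    ∑ ℓ ∈ Finset.range (m + 1),
        (risingFactorial (-(m : ℝ) - 1/2) ℓ * risingFactorial (-(m : ℝ)) ℓ *
            risingFactorial ((k : ℝ) - m + 1/2) ℓ) /
          (risingFactorial (1/2 - (m : ℝ)) ℓ * risingFactorial ((k : ℝ) - m + 3/2) ℓ *
            (Nat.factorial ℓ : ℝ)) =
      (((k : ℝ) - m + 1/2) / ((k : ℝ) + 1)) *
          ∑ ℓ ∈ Finset.range (m + 1),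
            (risingFactorial (-(m : ℝ) - 1/2) ℓ * risingFactorial (-(m : ℝ)) ℓ) /
              (risingFactorial (1/2 - (m : ℝ)) ℓ * (Nat.factorial ℓ : ℝ)) +
        (((m : ℝ) + 1/2) / ((k : ℝ) + 1)) *
          ∑ ℓ ∈ Finset.range (m + 1),
            (risingFactorial (-(m : ℝ)) ℓ * risingFactorial ((k : ℝ) - m + 1/2) ℓ) /
              (risingFactorial ((k : ℝ) - m + 3/2) ℓ * (Nat.factorial ℓ : ℝ)) := by
  set a : ℝ := -(m : ℝ) - 1/2
  set b : ℝ := (k : ℝ) - m + 1/2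
  have ha : ∀ i : ℕ, a + i ≠ 0 := fun i => by
    convert intCast_add_half_add_natCast_ne_zero (-m - 1) i using 2
    push_cast; ring
  have hb : ∀ i : ℕ, b + i ≠ 0 := fun i => by
    convert intCast_add_half_add_natCast_ne_zero (k - m) i using 2
    push_cast; ring
  have hba : b - a = k + 1 := by ring
  have key := sum_risingFactorial_ratio_mul_ratio ha hb (by rw [hba]; positivity) (range (m + 1))
    fun ℓ => risingFactorial (-(m : ℝ)) ℓ / (Nat.factorial ℓ : ℝ)
  rw [show 1/2 - (m : ℝ) = a + 1 by ring, show (k : ℝ) - m + 3/2 = b + 1 by ring,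
    show (m : ℝ) + 1/2 = -a by ring, ← hba]
  convert key using 1
  · exact sum_congr rfl fun ℓ _ => by ring
  · rw [neg_div, neg_mul, ← sub_eq_add_neg]
    congr 2 <;> exact sum_congr rfl fun ℓ _ => by ring

/-- Partial-fraction splitting of the terminating `₃F₂(-m-1/2, -m, k-m+1/2; 1/2-m, k-m+3/2; 1)`
into two `₂F₁(…; 1)` sums. -/
theorem threeF2_splitting (m k : ℕ) (hm : 1 ≤ m) :
    ∑ ℓ ∈ Finset.range (m + 1),
        (risingFactorial (-(m : ℝ) - 1/2) ℓ * risingFactorial (-(m : ℝ)) ℓ *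
            risingFactorial ((k : ℝ) - m + 1/2) ℓ) /
          (risingFactorial (1/2 - (m : ℝ)) ℓ * risingFactorial ((k : ℝ) - m + 3/2) ℓ *
            (Nat.factorial ℓ : ℝ)) =
      (((k : ℝ) - m + 1/2) / ((k : ℝ) + 1)) *
          ∑ ℓ ∈ Finset.range (m + 1),
            (risingFactorial (-(m : ℝ) - 1/2) ℓ * risingFactorial (-(m : ℝ)) ℓ) /
              (risingFactorial (1/2 - (m : ℝ)) ℓ * (Nat.factorial ℓ : ℝ)) +
        (((m : ℝ) + 1/2) / ((k : ℝ) + 1)) *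
          ∑ ℓ ∈ Finset.range (m + 1),
            (risingFactorial (-(m : ℝ)) ℓ * risingFactorial ((k : ℝ) - m + 1/2) ℓ) /
              (risingFactorial ((k : ℝ) - m + 3/2) ℓ * (Nat.factorial ℓ : ℝ)) :=
  threeF2_splitting_general m k
end

section
/- Let m ≥ 1 and k be natural numbers, and set S = Σ_{ℓ=0}^{m} [(−m − 1/2)_ℓ (−m)_ℓ] / [(1/2 − m)_ℓ ℓ!] · 1/(2(k − m + ℓ) + 1) and c = − Σ_{ℓ=0}^{m} [(−m − 1/2)_ℓ (−m)_ℓ] / [(1/2 − m)_ℓ ℓ!], where (x)_ℓ denotes the rising factorial (Pochhammer symbol) (x)_ℓ = x(x+1)⋯(x+ℓ−1), (x)_0 = 1. Then S + c/(2(k + 1)) = (2m + 1) · m! · 2^m / (2(k + 1) · ∏_{j=0}^{m} (2k + 1 − 2j)); in particular S + c/(2(k+1)) ≠ 0. -/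
open Finset
open scoped Nat

lemma two_mul_intCast_add_one_ne_zero {R : Type*} [Ring R] [CharZero R] (z : ℤ) :
    2 * (z : R) + 1 ≠ 0 := by
  have h : 2 * z + 1 ≠ 0 := by omega
  exact_mod_cast h

section PartialFractions

variable {K : Type*} [Field K]

lemma sum_alternating_choose_div_succ (n : ℕ) (x : K) :
    ∑ ℓ ∈ range (n + 2), (-1) ^ ℓ * ((n + 1).choose ℓ : K) / (x + ℓ) =
      ∑ ℓ ∈ range (n + 1), (-1) ^ ℓ * (n.choose ℓ : K) / (x + ℓ) -
        ∑ ℓ ∈ range (n + 1), (-1) ^ ℓ * (n.choose ℓ : K) / (x + 1 + ℓ) := by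
  have hextend : ∑ ℓ ∈ range (n + 1), (-1) ^ ℓ * (n.choose ℓ : K) / (x + ℓ) =
      ∑ ℓ ∈ range (n + 2), (-1) ^ ℓ * (n.choose ℓ : K) / (x + ℓ) := by
    simp [sum_range_succ _ (n + 1)]
  rw [hextend, sum_range_succ', sum_range_succ' _ (n + 1), ← sub_add_eq_add_sub,
    ← sum_sub_distrib]
  congr 1
  · refine sum_congr rfl fun ℓ _ => ?_
    rw [Nat.choose_succ_succ']
    push_cast
    ring
  · simp

theorem sum_alternating_choose_div (n : ℕ) (x : K) (hx : ∀ j ∈ range (n + 1), x + j ≠ 0) :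
    ∑ ℓ ∈ range (n + 1), (-1) ^ ℓ * (n.choose ℓ : K) / (x + ℓ) =
      n ! / ∏ j ∈ range (n + 1), (x + j) := by
  induction n generalizing x with
  | zero => simp
  | succ n ih =>
    have hx₀ : ∀ j ∈ range (n + 1), x + j ≠ 0 := fun j hj =>
      hx j (mem_range.2 (by simp at hj; omega))
    have hx₁ : ∀ j ∈ range (n + 1), x + 1 + j ≠ 0 := fun j hj => by
      simpa [add_assoc, add_comm (1 : K)] using hx (j + 1) (mem_range.2 (by simp at hj; omega))
    rw [sum_alternating_choose_div_succ, ih x hx₀, ih (x + 1) hx₁]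
    set Q := ∏ j ∈ range n, (x + 1 + j)
    have hQ : Q ≠ 0 := prod_ne_zero_iff.2 fun j hj => hx₁ j (mem_range.2 (by simp at hj; omega))
    have hfirst : x ≠ 0 := by simpa using hx 0 (by simp)
    have hlast : x + (n + 1) ≠ 0 := by exact_mod_cast hx (n + 1) (by simp)
    have h₀ : ∏ j ∈ range (n + 1), (x + j) = x * Q := by
      rw [prod_range_succ']; simp [Q, add_assoc, add_comm (1 : K), mul_comm]
    have h₁ : ∏ j ∈ range (n + 1), (x + 1 + j) = Q * (x + (n + 1)) := by
      rw [prod_range_succ]; ring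
    have h₂ : ∏ j ∈ range (n + 1 + 1), (x + j) = x * Q * (x + (n + 1)) := by
      rw [prod_range_succ, h₀]; push_cast; ring
    rw [h₀, h₁, h₂, Nat.factorial_succ]
    field_simp
    push_cast
    ring

end PartialFractions

lemma risingFactorial_mul_add (x : ℝ) (n : ℕ) :
    risingFactorial x n * (x + n) = x * risingFactorial (x + 1) n := by
  unfold risingFactorial
  rw [← prod_range_succ, prod_range_succ']
  simp only [Nat.cast_zero, add_zero, Nat.cast_succ, add_assoc, add_comm (1 : ℝ), mul_comm]

lemma risingFactorial_neg_natCast (m n : ℕ) :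
    risingFactorial (-m) n = (-1) ^ n * (n ! * m.choose n) := by
  have h := descPochhammer_eval_eq_prod_range n (m : ℝ)
  rw [descPochhammer_eval_eq_descFactorial, Nat.descFactorial_eq_factorial_mul_choose] at h
  push_cast at h
  have hneg := prod_neg (s := range n) fun j => (m : ℝ) - j
  rw [card_range] at hneg
  rw [h, ← hneg, risingFactorial]
  exact prod_congr rfl fun i _ => by ring

lemma risingFactorial_half_sub_natCast_ne_zero (m n : ℕ) : risingFactorial (1 / 2 - m) n ≠ 0 :=
  prod_ne_zero_iff.2 fun i _ h => two_mul_intCast_add_one_ne_zero (R := ℝ) (i - m) <| by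
    push_cast; linarith

lemma prod_range_sub_natCast_reflect {R : Type*} [CommRing R] (a : R) (n : ℕ) :
    ∏ j ∈ range (n + 1), (a - j) = ∏ j ∈ range (n + 1), (a - n + j) := by
  rw [← prod_range_reflect]
  refine prod_congr rfl fun j hj => ?_
  rw [Nat.add_sub_cancel, Nat.cast_sub (by simpa [Nat.lt_succ_iff] using hj)]
  ring

noncomputable def hypergeomCoeff (m ℓ : ℕ) : ℝ :=
  (risingFactorial (-(m : ℝ) - 1/2) ℓ * risingFactorial (-(m : ℝ)) ℓ) /
    (risingFactorial (1/2 - (m : ℝ)) ℓ * (Nat.factorial ℓ : ℝ))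

lemma hypergeomCoeff_eq (m ℓ : ℕ) :
    hypergeomCoeff m ℓ = (2 * m + 1) / (2 * m + 1 - 2 * ℓ) * ((-1) ^ ℓ * m.choose ℓ) := by
  have hshift := risingFactorial_mul_add (-(m : ℝ) - 1/2) ℓ
  rw [show -(m : ℝ) - 1/2 + 1 = 1/2 - m by ring] at hshift
  have hrf := risingFactorial_half_sub_natCast_ne_zero m ℓ
  have hℓ : (2 * m + 1 - 2 * ℓ : ℝ) ≠ 0 := fun h =>
    two_mul_intCast_add_one_ne_zero (R := ℝ) (m - ℓ) (by push_cast; linarith)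
  rw [hypergeomCoeff, risingFactorial_neg_natCast]
  generalize risingFactorial (-(m : ℝ) - 1/2) ℓ = A at hshift ⊢
  generalize risingFactorial (1/2 - (m : ℝ)) ℓ = B at hshift hrf ⊢
  field_simp
  linear_combination (-2 * (m.choose ℓ : ℝ)) * hshift

lemma hypergeomCoeff_mul_sub_div (m k ℓ : ℕ) :
    hypergeomCoeff m ℓ * (1 / (2 * ((k : ℝ) - m + ℓ) + 1)) -
        hypergeomCoeff m ℓ / (2 * ((k : ℝ) + 1)) =
      (2 * m + 1) / (4 * (k + 1)) * ((-1) ^ ℓ * m.choose ℓ / ((k - m + 1/2 : ℝ) + ℓ)) := by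
  set D : ℝ := (k - m + 1/2 : ℝ) + ℓ with hD_def
  have hD : D ≠ 0 := fun h =>
    two_mul_intCast_add_one_ne_zero (R := ℝ) (k - m + ℓ) (by push_cast; linarith)
  have hℓ : (k : ℝ) + 1 - D ≠ 0 := fun h =>
    two_mul_intCast_add_one_ne_zero (R := ℝ) (m - ℓ) (by push_cast; linarith)
  rw [hypergeomCoeff_eq, show (2 * m + 1 - 2 * ℓ : ℝ) = 2 * (k + 1 - D) by ring,
    show 2 * ((k : ℝ) - m + ℓ) + 1 = 2 * D by ring]
  clear_value D
  field_simp
  ring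

theorem finite_part_value_nonzero_general (m k : ℕ) (S c : ℝ)
    (hS : S = ∑ ℓ ∈ Finset.range (m + 1),
        (risingFactorial (-(m : ℝ) - 1/2) ℓ * risingFactorial (-(m : ℝ)) ℓ) /
            (risingFactorial (1/2 - (m : ℝ)) ℓ * (Nat.factorial ℓ : ℝ)) *
          (1 / (2 * ((k : ℝ) - m + ℓ) + 1)))
    (hc : c = -∑ ℓ ∈ Finset.range (m + 1),
        (risingFactorial (-(m : ℝ) - 1/2) ℓ * risingFactorial (-(m : ℝ)) ℓ) /
          (risingFactorial (1/2 - (m : ℝ)) ℓ * (Nat.factorial ℓ : ℝ))) :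
    S + c / (2 * ((k : ℝ) + 1)) =
      (2 * (m : ℝ) + 1) * (Nat.factorial m : ℝ) * 2 ^ m /
        (2 * ((k : ℝ) + 1) * ∏ j ∈ Finset.range (m + 1), (2 * (k : ℝ) + 1 - 2 * (j : ℝ))) ∧
    S + c / (2 * ((k : ℝ) + 1)) ≠ 0 := by
  set x : ℝ := k - m + 1/2 with hx
  have hS' : S =
      ∑ ℓ ∈ range (m + 1), hypergeomCoeff m ℓ * (1 / (2 * ((k : ℝ) - m + ℓ) + 1)) := hS
  have hc' : c = -∑ ℓ ∈ range (m + 1), hypergeomCoeff m ℓ := hc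
  have hP : ∏ j ∈ range (m + 1), (x + j) ≠ 0 := prod_ne_zero_iff.2 fun j _ h =>
    two_mul_intCast_add_one_ne_zero (R := ℝ) (k - m + j) (by push_cast; linarith)
  have hvalue : S + c / (2 * ((k : ℝ) + 1)) =
      (2 * m + 1) / (4 * (k + 1)) * (m ! / ∏ j ∈ range (m + 1), (x + j)) := by
    rw [hS', hc', neg_div, ← sub_eq_add_neg, sum_div, ← sum_sub_distrib,
      sum_congr rfl fun ℓ _ => hypergeomCoeff_mul_sub_div m k ℓ, ← mul_sum,
      sum_alternating_choose_div m x (prod_ne_zero_iff.1 hP)]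
  have hprod : ∏ j ∈ range (m + 1), (2 * (k : ℝ) + 1 - 2 * j) =
      2 ^ (m + 1) * ∏ j ∈ range (m + 1), (x + j) :=
    calc ∏ j ∈ range (m + 1), (2 * (k : ℝ) + 1 - 2 * j)
        = ∏ j ∈ range (m + 1), 2 * ((k + 1/2 : ℝ) - j) := prod_congr rfl fun _ _ => by ring
      _ = 2 ^ (m + 1) * ∏ j ∈ range (m + 1), (x + j) := by
        rw [prod_mul_distrib, prod_const, card_range, prod_range_sub_natCast_reflect, hx]
        ring_nf
  refine ⟨?_, ?_⟩
  · rw [hvalue, hprod]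
    field_simp
    ring
  · rw [hvalue]
    exact mul_ne_zero (by positivity) (div_ne_zero (by positivity) hP)

/-- The finite part `I_{k,m} = S + c/(2(k+1))` equals
`(2m+1) m! 2^m / (2(k+1) ∏_{j=0}^m (2k+1-2j))`; in particular it is nonzero. -/
theorem finite_part_value_nonzero (m k : ℕ) (hm : 1 ≤ m) (S c : ℝ)
    (hS : S = ∑ ℓ ∈ Finset.range (m + 1),
        (risingFactorial (-(m : ℝ) - 1/2) ℓ * risingFactorial (-(m : ℝ)) ℓ) /
            (risingFactorial (1/2 - (m : ℝ)) ℓ * (Nat.factorial ℓ : ℝ)) *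
          (1 / (2 * ((k : ℝ) - m + ℓ) + 1)))
    (hc : c = -∑ ℓ ∈ Finset.range (m + 1),
        (risingFactorial (-(m : ℝ) - 1/2) ℓ * risingFactorial (-(m : ℝ)) ℓ) /
          (risingFactorial (1/2 - (m : ℝ)) ℓ * (Nat.factorial ℓ : ℝ))) :
    S + c / (2 * ((k : ℝ) + 1)) =
      (2 * (m : ℝ) + 1) * (Nat.factorial m : ℝ) * 2 ^ m /
        (2 * ((k : ℝ) + 1) * ∏ j ∈ Finset.range (m + 1), (2 * (k : ℝ) + 1 - 2 * (j : ℝ))) ∧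
    S + c / (2 * ((k : ℝ) + 1)) ≠ 0 :=
  finite_part_value_nonzero_general m k S c hS hc
end

section
/- Let m ≥ 1 and k be natural numbers. Then, in the rational numbers, 2(k − m) · (−2)^m / ∏_{j=1}^{m} (2j − 1) + (2m + 1) · 2^m / ∏_{j=0}^{m−1} (2k + 1 − 2j) ≠ 0 (here k − m is taken as an integer, possibly negative). -/
/-!
Clearing the odd denominators, the sum is `2 ^ m` times `2 a / P + b / Q` with `P`, `Q`, `b` odd;
over the common denominator `P Q` its numerator `2 a Q + b P` is odd, hence nonzero.
-/

theorem Finset.odd_prod {ι R : Type*} [CommSemiring R] {s : Finset ι} {f : ι → R}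
    (h : ∀ i ∈ s, Odd (f i)) : Odd (∏ i ∈ s, f i) :=
  Finset.prod_induction f Odd (fun _ _ ha hb => ha.mul hb) odd_one h

theorem two_mul_div_add_odd_div_ne_zero (a : ℤ) {b P Q : ℤ} (hb : Odd b) (hP : Odd P)
    (hQ : Odd Q) : (2 * a / P + b / Q : ℚ) ≠ 0 := by
  have cast_ne_zero {n : ℤ} (hn : Odd n) : (n : ℚ) ≠ 0 :=
    Int.cast_ne_zero.mpr fun h0 => by simp [h0] at hn
  have hnum : Odd (2 * a * Q + P * b) := (even_two_mul _ |>.mul_right Q).add_odd (hP.mul hb)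
  rw [div_add_div _ _ (cast_ne_zero hP) (cast_ne_zero hQ)]
  exact div_ne_zero (by exact_mod_cast cast_ne_zero hnum)
    (mul_ne_zero (cast_ne_zero hP) (cast_ne_zero hQ))

theorem two_adic_nonvanishing_general (m k : ℕ) :
    2 * ((k : ℚ) - (m : ℚ)) * (-2) ^ m / (∏ j ∈ Finset.Icc 1 m, (2 * (j : ℚ) - 1)) +
        (2 * (m : ℚ) + 1) * 2 ^ m / (∏ j ∈ Finset.range m, (2 * (k : ℚ) + 1 - 2 * (j : ℚ))) ≠
      0 := by
  have hP : Odd (∏ j ∈ Finset.Icc 1 m, (2 * (j : ℤ) - 1)) :=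
    Finset.odd_prod fun j _ => ⟨j - 1, by ring⟩
  have hQ : Odd (∏ j ∈ Finset.range m, (2 * (k : ℤ) + 1 - 2 * (j : ℤ))) :=
    Finset.odd_prod fun j _ => ⟨k - j, by ring⟩
  have key := two_mul_div_add_odd_div_ne_zero (((k : ℤ) - m) * (-1) ^ m) ⟨m, rfl⟩ hP hQ
  push_cast at key
  convert mul_ne_zero (pow_ne_zero m two_ne_zero) key using 1
  rw [neg_pow]
  ring

/-- Nonvanishing by a 2-adic parity argument:
`2(k-m) (-2)^m / ∏_{j=1}^m (2j-1) + (2m+1) 2^m / ∏_{j=0}^{m-1} (2k+1-2j) ≠ 0` in `ℚ`. -/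
theorem two_adic_nonvanishing (m k : ℕ) (hm : 1 ≤ m) :
    2 * ((k : ℚ) - (m : ℚ)) * (-2) ^ m / (∏ j ∈ Finset.Icc 1 m, (2 * (j : ℚ) - 1)) +
        (2 * (m : ℚ) + 1) * 2 ^ m / (∏ j ∈ Finset.range m, (2 * (k : ℚ) + 1 - 2 * (j : ℚ))) ≠
      0 :=
  two_adic_nonvanishing_general m k
end
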